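/- arXiv:2308.00899 — 2 statements merged into one kernel-verified Lean document; each statement's English description precedes it below -/
import Mathlib

section
/- Let f₁, …, f_N : ℝⁿ → ℝ be continuously differentiable, let X ⊆ ℝⁿ be bounded, let δ ≥ 0, β ∈ (−1, 1), and γ ∈ ℝ. Then there exist δ' > 0 and ᾱ > 0 such that for all α ∈ (0, ᾱ], all k̄ ∈ ℕ, and every random-reshuffling-with-momentum trajectory (x_{k,i}) of f₁, …, f_N with step size α and parameters β, γ, δ whose outer iterates satisfy x₀, …, x_{k̄} ∈ X, one has ‖x_{k,i} − x_{k,i−1}‖ ≤ δ'α for all k ∈ {0, …, k̄} and i ∈ {0, …, N}. (This is the paper's Lemma 4.1 in the continuously differentiable case, where the Clarke subdifferentials ∂f_i are the singletons {∇f_i}.) -/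
/-- A random-reshuffling-with-momentum trajectory of `f 0, …, f (N-1)` with step size `α`
and parameters `β, γ, δ`.  Here `x k j` represents the point `x_{k,j}` of the paper for
`j ∈ {-1, 0, …, N}`, with `x_{k,-1} = x_{k-1,N-1}` (and `x 0 (-1)` playing the role of the
extra initial point `x_{-1,N-1}`), `x_{k+1,0} = x_{k,N}`, `‖x_{-1,N-1} - x₀‖ ≤ δα`, and
for every `k` there is a permutation `σᵏ` such that for every `i ∈ {0, …, N-1}` (the
paper's index `i+1 ∈ {1, …, N}`):
`x_{k,i+1} = x_{k,i} + β (x_{k,i} - x_{k,i-1}) - α ∇f_{σᵏ(i)}(y_{k,i+1})` where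
`y_{k,i+1} = x_{k,i} + γ (x_{k,i} - x_{k,i-1})`. -/
def IsRRMTraj {n N : ℕ} (f : Fin N → EuclideanSpace ℝ (Fin n) → ℝ) (α β γ δ : ℝ)
    (x : ℕ → ℤ → EuclideanSpace ℝ (Fin n)) : Prop :=
  ‖x 0 (-1) - x 0 0‖ ≤ δ * α ∧
  (∀ k : ℕ, x (k + 1) (-1) = x k ((N : ℤ) - 1)) ∧
  (∀ k : ℕ, x (k + 1) 0 = x k (N : ℤ)) ∧
  (∀ k : ℕ, ∃ σ : Equiv.Perm (Fin N), ∀ i : Fin N,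
    x k (((i : ℕ) : ℤ) + 1)
      = x k ((i : ℕ) : ℤ) + β • (x k ((i : ℕ) : ℤ) - x k (((i : ℕ) : ℤ) - 1))
        - α • gradient (f (σ i))
            (x k ((i : ℕ) : ℤ) + γ • (x k ((i : ℕ) : ℤ) - x k (((i : ℕ) : ℤ) - 1))))

/-!
Gradients are bounded, say by `M`, on the compact set `K` of points within distance `1` of `X`.
If the step entering an epoch has length at most `r = δ' α`, then as long
as the steps stay below `r`, every extrapolated point `y_{k,i}` lies within `(N + |γ|) r ≤ 1`
of `x_k ∈ X`, hence in `K`, so the next step has length at most `|β| r + α M ≤ r`, provided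
`(1 - |β|) δ' ≥ M`. The bound thus propagates through each epoch, and then to the next one,
since the first step of epoch `k + 1` is the last step of epoch `k`.
-/

open Metric

theorem ContDiff.continuous_gradient {𝕜 F : Type*} [RCLike 𝕜] [NormedAddCommGroup F]
    [InnerProductSpace 𝕜 F] [CompleteSpace F] {f : F → 𝕜} (hf : ContDiff 𝕜 1 f) :
    Continuous (gradient f) :=
  (InnerProductSpace.toDual 𝕜 F).symm.continuous.comp (hf.continuous_fderiv one_ne_zero)

theorem IsCompact.exists_bound_gradient {ι 𝕜 F : Type*} [Finite ι] [RCLike 𝕜]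
    [NormedAddCommGroup F] [InnerProductSpace 𝕜 F] [CompleteSpace F] {f : ι → F → 𝕜}
    (hf : ∀ i, ContDiff 𝕜 1 (f i)) {K : Set F} (hK : IsCompact K) :
    ∃ M, 0 ≤ M ∧ ∀ i, ∀ z ∈ K, ‖gradient (f i) z‖ ≤ M := by
  choose C hC using fun i ↦ hK.exists_bound_of_continuousOn (hf i).continuous_gradient.continuousOn
  obtain ⟨M, hM⟩ := Finite.exists_le C
  exact ⟨max M 0, le_max_right _ _, fun i z hz ↦ ((hC i z hz).trans (hM i)).trans (le_max_left _ _)⟩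

section Epoch

variable {E : Type*} [NormedAddCommGroup E] [NormedSpace ℝ E]

theorem norm_smul_sub_smul_le (β : ℝ) {α : ℝ} (hα : 0 ≤ α) (d g : E) :
    ‖β • d - α • g‖ ≤ |β| * ‖d‖ + α * ‖g‖ := by
  calc ‖β • d - α • g‖ ≤ ‖β • d‖ + ‖α • g‖ := norm_sub_le _ _
    _ = |β| * ‖d‖ + α * ‖g‖ := by
      rw [norm_smul, norm_smul, Real.norm_eq_abs, Real.norm_of_nonneg hα]

theorem momentum_epoch_norm_sub_le {N : ℕ} {z : ℤ → E} {g : Fin N → E → E} {α β γ r M : ℝ}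
    (hα : 0 ≤ α) (hr : |β| * r + α * M ≤ r) (h0 : ‖z 0 - z (-1)‖ ≤ r)
    (hg : ∀ j, ∀ y ∈ closedBall (z 0) ((N + |γ|) * r), ‖g j y‖ ≤ M)
    (hz : ∀ j : Fin N, z ((j : ℕ) + 1)
      = z (j : ℕ) + β • (z (j : ℕ) - z ((j : ℕ) - 1))
        - α • g j (z (j : ℕ) + γ • (z (j : ℕ) - z ((j : ℕ) - 1)))) :
    ∀ j ≤ N, ‖z j - z (j - 1)‖ ≤ r ∧ ‖z j - z 0‖ ≤ j * r := by
  have hr0 : 0 ≤ r := (norm_nonneg _).trans h0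
  intro j hj
  induction j with
  | zero => simpa using h0
  | succ j ih =>
    obtain ⟨hstep, hdisp⟩ := ih (Nat.le_of_succ_le hj)
    set d := z j - z (j - 1)
    have hjN : (j : ℝ) ≤ N := by exact_mod_cast Nat.le_of_succ_le hj
    have hy : z j + γ • d ∈ closedBall (z 0) ((N + |γ|) * r) := by
      rw [mem_closedBall, dist_eq_norm, add_sub_right_comm]
      calc ‖z j - z 0 + γ • d‖ ≤ ‖z j - z 0‖ + |γ| * ‖d‖ := by
            rw [← Real.norm_eq_abs, ← norm_smul]; exact norm_add_le _ _
        _ ≤ j * r + |γ| * r := by gcongr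
        _ ≤ (N + |γ|) * r := by nlinarith
    have hnext : ‖z (j + 1) - z j‖ ≤ r := by
      rw [hz ⟨j, hj⟩, add_sub_assoc, add_sub_cancel_left]
      calc ‖β • d - α • g ⟨j, hj⟩ (z j + γ • d)‖
          ≤ |β| * ‖d‖ + α * ‖g ⟨j, hj⟩ (z j + γ • d)‖ := norm_smul_sub_smul_le β hα _ _
        _ ≤ |β| * r + α * M := by gcongr; exact hg _ _ hy
        _ ≤ r := hr
    push_cast
    refine ⟨by simpa using hnext, ?_⟩
    calc ‖z (j + 1) - z 0‖ ≤ ‖z (j + 1) - z j‖ + ‖z j - z 0‖ :=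
          norm_sub_le_norm_sub_add_norm_sub _ _ _
      _ ≤ (j + 1) * r := by linarith

end Epoch

theorem IsRRMTraj.norm_sub_le {n N : ℕ} {f : Fin N → EuclideanSpace ℝ (Fin n) → ℝ}
    {α β γ δ r M : ℝ} {x : ℕ → ℤ → EuclideanSpace ℝ (Fin n)} (hx : IsRRMTraj f α β γ δ x)
    (hα : 0 ≤ α) (hδr : δ * α ≤ r) (hr : |β| * r + α * M ≤ r) {kbar : ℕ}
    (hg : ∀ k ≤ kbar, ∀ i, ∀ y ∈ closedBall (x k 0) ((N + |γ|) * r), ‖gradient (f i) y‖ ≤ M) :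
    ∀ k ≤ kbar, ∀ j ≤ N, ‖x k j - x k (j - 1)‖ ≤ r := by
  obtain ⟨hinit, hprev, hfirst, hrec⟩ := hx
  have hepoch : ∀ k ≤ kbar, ‖x k 0 - x k (-1)‖ ≤ r → ∀ j ≤ N, ‖x k j - x k (j - 1)‖ ≤ r := by
    intro k hk h0 j hj
    obtain ⟨σ, hσ⟩ := hrec k
    exact (momentum_epoch_norm_sub_le hα hr h0 (fun j ↦ hg k hk (σ j)) hσ j hj).1
  suffices h : ∀ k ≤ kbar, ‖x k 0 - x k (-1)‖ ≤ r from fun k hk ↦ hepoch k hk (h k hk)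
  intro k hk
  induction k with
  | zero => rw [norm_sub_rev]; exact hinit.trans hδr
  | succ k ih =>
    have hk' := Nat.le_of_succ_le hk
    rw [hfirst, hprev]
    exact hepoch k hk' (ih hk') N le_rfl

theorem stmt_8_general {n N : ℕ} (f : Fin N → EuclideanSpace ℝ (Fin n) → ℝ)
    (hf : ∀ i, ContDiff ℝ 1 (f i))
    (X : Set (EuclideanSpace ℝ (Fin n))) (hX : Bornology.IsBounded X)
    (β γ δ : ℝ) (hβ : β ∈ Set.Ioo (-1 : ℝ) 1) :
    ∃ δ' ᾱ : ℝ, 0 < δ' ∧ 0 < ᾱ ∧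
      ∀ α : ℝ, 0 < α → α ≤ ᾱ → ∀ kbar : ℕ,
        ∀ x : ℕ → ℤ → EuclideanSpace ℝ (Fin n), IsRRMTraj f α β γ δ x →
          (∀ k : ℕ, k ≤ kbar → x k 0 ∈ X) →
          ∀ k : ℕ, k ≤ kbar → ∀ i : ℤ, 0 ≤ i → i ≤ (N : ℤ) →
            ‖x k i - x k (i - 1)‖ ≤ δ' * α := by
  have hβ1 : 0 < 1 - |β| := by rw [sub_pos, abs_lt]; exact hβ
  obtain ⟨M, hM0, hM⟩ := (isCompact_of_isClosed_isBounded isClosed_cthickening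
    hX.cthickening).exists_bound_gradient (K := cthickening 1 X) hf
  set δ' := max δ (M / (1 - |β|)) + 1
  have hδ' : 0 < δ' := by positivity
  have hMδ' : M ≤ (1 - |β|) * δ' := by
    rw [← div_le_iff₀' hβ1]; linarith [le_max_right δ (M / (1 - |β|))]
  refine ⟨δ', 1 / ((N + |γ|) * δ' + 1), hδ', by positivity, ?_⟩
  intro α hα hαᾱ kbar x hx hxX k hk i hi0 hiN
  have hradius : (N + |γ|) * (δ' * α) ≤ 1 := by
    rw [le_div_iff₀ (by positivity)] at hαᾱ; nlinarith
  lift i to ℕ using hi0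
  refine hx.norm_sub_le hα.le (by gcongr; linarith [le_max_left δ (M / (1 - |β|))])
    (by nlinarith) (fun k hk i y hy ↦ hM i y ?_) k hk i (by exact_mod_cast hiN)
  exact closedBall_subset_cthickening (hxX k hk) 1 (closedBall_subset_closedBall hradius hy)

theorem stmt_8 {n N : ℕ} (f : Fin N → EuclideanSpace ℝ (Fin n) → ℝ)
    (hf : ∀ i, ContDiff ℝ 1 (f i))
    (X : Set (EuclideanSpace ℝ (Fin n))) (hX : Bornology.IsBounded X)
    (β γ δ : ℝ) (hβ : β ∈ Set.Ioo (-1 : ℝ) 1) (hδ : 0 ≤ δ) :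
    ∃ δ' ᾱ : ℝ, 0 < δ' ∧ 0 < ᾱ ∧
      ∀ α : ℝ, 0 < α → α ≤ ᾱ → ∀ kbar : ℕ,
        ∀ x : ℕ → ℤ → EuclideanSpace ℝ (Fin n), IsRRMTraj f α β γ δ x →
          (∀ k : ℕ, k ≤ kbar → x k 0 ∈ X) →
          ∀ k : ℕ, k ≤ kbar → ∀ i : ℤ, 0 ≤ i → i ≤ (N : ℤ) →
            ‖x k i - x k (i - 1)‖ ≤ δ' * α :=
  stmt_8_general f hf X hX β γ δ hβ
end

section
/- Let f : ℝⁿ → ℝ be continuously differentiable, let c > 0, T > 0, and let x : [0, T] → ℝⁿ be differentiable with x'(t) = −c ∇f(x(t)) for all t ∈ [0, T]. Then for every t ∈ [0, T], ‖x(t) − x(0)‖ ≤ √(c · t · (f(x(0)) − f(x(t)))). (This is the length bound (3.7a)–(3.7f) established via the Cauchy–Schwarz inequality in the proof of the paper's Corollary on stability of iterates, in the continuously differentiable case.) -/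
/-!
Along the flow, `d/ds f (x s) = -c ‖∇f (x s)‖²`, so `f (x 0) - f (x t) = c ∫₀ᵗ ‖∇f (x s)‖²`.
On the other hand `x t - x 0 = ∫₀ᵗ x'`, and Cauchy–Schwarz gives
`‖x t - x 0‖² ≤ t ∫₀ᵗ ‖x'‖² = c² t ∫₀ᵗ ‖∇f (x s)‖² = c t (f (x 0) - f (x t))`.
-/

open Set InnerProductSpace

theorem sq_intervalIntegral_le_mul_intervalIntegral_sq {h : ℝ → ℝ} {a b : ℝ} (hab : a ≤ b)
    (hh : IntervalIntegrable h MeasureTheory.volume a b)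
    (hh2 : IntervalIntegrable (fun s => h s ^ 2) MeasureTheory.volume a b) :
    (∫ s in a..b, h s) ^ 2 ≤ (b - a) * ∫ s in a..b, h s ^ 2 := by
  rcases hab.eq_or_lt with rfl | hlt
  · simp
  set I := ∫ s in a..b, h s
  set J := ∫ s in a..b, h s ^ 2
  have hL : 0 < b - a := sub_pos.mpr hlt
  have hexpand : ∫ s in a..b, ((b - a) * h s - I) ^ 2 = (b - a) * ((b - a) * J - I ^ 2) := by
    have hpoly : ∀ s, ((b - a) * h s - I) ^ 2
        = ((b - a) ^ 2 * h s ^ 2 - 2 * (b - a) * I * h s) + I ^ 2 := fun s => by ring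
    simp only [hpoly]
    rw [intervalIntegral.integral_add ((hh2.const_mul _).sub (hh.const_mul _))
        intervalIntegrable_const, intervalIntegral.integral_sub (hh2.const_mul _) (hh.const_mul _),
      intervalIntegral.integral_const_mul, intervalIntegral.integral_const_mul,
      intervalIntegral.integral_const, smul_eq_mul]
    ring
  have hnonneg : 0 ≤ (b - a) * ((b - a) * J - I ^ 2) :=
    hexpand ▸ intervalIntegral.integral_nonneg hab fun s _ => sq_nonneg _
  linarith [(mul_nonneg_iff_of_pos_left hL).mp hnonneg]

theorem norm_sub_sq_le_mul_intervalIntegral_norm_deriv_sq {E : Type*} [NormedAddCommGroup E]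
    [NormedSpace ℝ E] [CompleteSpace E] {γ v : ℝ → E} {a b : ℝ} (hab : a ≤ b)
    (hγ : ∀ s ∈ Icc a b, HasDerivAt γ (v s) s) (hv : ContinuousOn v (Icc a b)) :
    ‖γ b - γ a‖ ^ 2 ≤ (b - a) * ∫ s in a..b, ‖v s‖ ^ 2 := by
  rw [← uIcc_of_le hab] at hγ hv
  have hftc : ∫ s in a..b, v s = γ b - γ a :=
    intervalIntegral.integral_eq_sub_of_hasDerivAt hγ hv.intervalIntegrable
  calc ‖γ b - γ a‖ ^ 2 ≤ (∫ s in a..b, ‖v s‖) ^ 2 := by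
        rw [← hftc]
        gcongr
        exact intervalIntegral.norm_integral_le_integral_norm hab
    _ ≤ (b - a) * ∫ s in a..b, ‖v s‖ ^ 2 :=
        sq_intervalIntegral_le_mul_intervalIntegral_sq hab hv.norm.intervalIntegrable
          (hv.norm.pow 2).intervalIntegrable

section GradientFlow

variable {E : Type*} [NormedAddCommGroup E] [InnerProductSpace ℝ E] [CompleteSpace E]
  {f : E → ℝ}

theorem ContDiff.continuous_gradient_s16 (hf : ContDiff ℝ 1 f) : Continuous (gradient f) :=
  (toDual ℝ E).symm.continuous.comp (hf.continuous_fderiv one_ne_zero)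

theorem sub_eq_mul_integral_norm_gradient_sq_of_gradientFlow (hf : ContDiff ℝ 1 f)
    (c : ℝ) {x : ℝ → E} {a b : ℝ} (hab : a ≤ b)
    (hx : ∀ s ∈ Icc a b, HasDerivAt x (-(c • gradient f (x s))) s) :
    f (x a) - f (x b) = c * ∫ s in a..b, ‖gradient f (x s)‖ ^ 2 := by
  rw [← uIcc_of_le hab] at hx
  have hchain : ∀ s ∈ uIcc a b,
      HasDerivAt (f ∘ x) (-(c * ‖gradient f (x s)‖ ^ 2)) s := fun s hs => by
    have := ((hf.differentiable one_ne_zero (x s)).hasGradientAt.hasFDerivAt).comp_hasDerivAt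
      s (hx s hs)
    rwa [toDual_apply_apply, inner_neg_right, real_inner_smul_right,
      real_inner_self_eq_norm_sq] at this
  have hcont : ContinuousOn (fun s => -(c * ‖gradient f (x s)‖ ^ 2)) (uIcc a b) :=
    (continuousOn_const.mul
      ((hf.continuous_gradient_s16.comp_continuousOn (HasDerivAt.continuousOn hx)).norm.pow 2)).neg
  have hftc := intervalIntegral.integral_eq_sub_of_hasDerivAt hchain hcont.intervalIntegrable
  rw [intervalIntegral.integral_neg, intervalIntegral.integral_const_mul] at hftc
  simp only [Function.comp_apply] at hftc
  linarith

end GradientFlow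

theorem stmt_16_general {n : ℕ} (f : EuclideanSpace ℝ (Fin n) → ℝ) (hf : ContDiff ℝ 1 f)
    (c T : ℝ)
    (x : ℝ → EuclideanSpace ℝ (Fin n))
    (hx : ∀ t ∈ Set.Icc (0 : ℝ) T, HasDerivAt x (-(c • gradient f (x t))) t) :
    ∀ t ∈ Set.Icc (0 : ℝ) T,
      ‖x t - x 0‖ ≤ Real.sqrt (c * t * (f (x 0) - f (x t))) := by
  intro t ⟨ht0, htT⟩
  have hx' : ∀ s ∈ Icc 0 t, HasDerivAt x (-(c • gradient f (x s))) s :=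
    fun s hs => hx s (Icc_subset_Icc le_rfl htT hs)
  have hgrad : ContinuousOn (fun s => -(c • gradient f (x s))) (Icc 0 t) :=
    ((hf.continuous_gradient_s16.comp_continuousOn (HasDerivAt.continuousOn hx')).const_smul c).neg
  have hlength := norm_sub_sq_le_mul_intervalIntegral_norm_deriv_sq ht0 hx' hgrad
  have henergy := sub_eq_mul_integral_norm_gradient_sq_of_gradientFlow hf c ht0 hx'
  simp only [norm_neg, norm_smul, mul_pow, Real.norm_eq_abs, sq_abs,
    intervalIntegral.integral_const_mul] at hlength
  refine Real.le_sqrt_of_sq_le ?_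
  rw [henergy]
  linarith

theorem stmt_16 {n : ℕ} (f : EuclideanSpace ℝ (Fin n) → ℝ) (hf : ContDiff ℝ 1 f)
    (c T : ℝ) (hc : 0 < c) (hT : 0 < T)
    (x : ℝ → EuclideanSpace ℝ (Fin n))
    (hx : ∀ t ∈ Set.Icc (0 : ℝ) T, HasDerivAt x (-(c • gradient f (x t))) t) :
    ∀ t ∈ Set.Icc (0 : ℝ) T,
      ‖x t - x 0‖ ≤ Real.sqrt (c * t * (f (x 0) - f (x t))) :=
  stmt_16_general f hf c T x hx
end
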